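/- (Matrosov decrement combination.) Let {Y_j}_{j=1}^{M} be continuous functions with the Matrosov property on the compact set closed-ball(0_m,γ) × D(δ,Δ). Then there exist ζ > 0 and constants K₁,…,K_{M−1} > 0 such that Z(z,x) := Σ_{j=1}^{M−1} K_j Y_j(z,x) + Y_M(z,x) ≤ −ζ/2^{M−1} for all (z,x) in the set. -/

import Mathlib

open Filter MeasureTheory Set Topology Metric

noncomputable section

section Core

variable {E : Type*} [NormedAddCommGroup E] [InnerProductSpace ℝ E]

/-- Clarke generalized directional derivative of `U` at `z` in direction `v`:
`U°(z;v) = limsup_{y→z, h↓0} (U(y+hv) − U(y))/h`. -/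
def cDD {G : Type*} [NormedAddCommGroup G] [NormedSpace ℝ G] (U : G → ℝ) (z v : G) : ℝ :=
  limsup (fun p : G × ℝ => (U (p.1 + p.2 • v) - U p.1) / p.2) ((𝓝 z) ×ˢ (𝓝[>] (0:ℝ)))

/-- Clarke regularity of `U` at `z`: for every direction the one-sided directional
derivative exists and equals the Clarke generalized directional derivative. -/
def RegularAt {G : Type*} [NormedAddCommGroup G] [NormedSpace ℝ G] (U : G → ℝ) (z : G) : Prop :=
  ∀ v, Tendsto (fun h : ℝ => (U (z + h • v) - U z) / h) (𝓝[>] (0:ℝ)) (𝓝 (cDD U z v))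

/-- Clarke generalized gradient (autonomous / inner-product space version). -/
def cGrad (U : E → ℝ) (z : E) : Set E :=
  {p | ∀ v, (inner ℝ p v : ℝ) ≤ cDD U z v}

/-- Pairing on `E × ℝ` playing the role of the inner product `pᵀ[q;s]`. -/
def pin (p q : E × ℝ) : ℝ := (inner ℝ p.1 q.1 : ℝ) + p.2 * q.2

/-- Clarke generalized gradient of a time-varying function on `E × ℝ`. -/
def cGradP (U : E × ℝ → ℝ) (z : E × ℝ) : Set (E × ℝ) :=
  {p | ∀ v, pin p v ≤ cDD U z v}

/-- An interval starting at `τ`, either `[τ,∞)` or `[τ,T)`. -/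
def IntervalFrom (I : Set ℝ) (τ : ℝ) : Prop :=
  I = Ici τ ∨ ∃ T, τ < T ∧ I = Ico τ T

/-- `x` is a (locally absolutely continuous, Carathéodory) solution of `ẋ ∈ F(x,t)` on `I`,
with a.e. derivative `x'`. -/
def IsSolOn (F : E → ℝ → Set E) (x x' : ℝ → E) (I : Set ℝ) : Prop :=
  ContinuousOn x I ∧
  (∀ᵐ t, t ∈ I → HasDerivAt x (x' t) t ∧ x' t ∈ F (x t) t) ∧
  ∀ s ∈ I, ∀ t ∈ I, IntervalIntegrable x' volume s t ∧ x t - x s = ∫ τ in s..t, x' τ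

/-- Maximal solution starting at time `τ`: a solution with no proper right extension. -/
def IsMaxSol (F : E → ℝ → Set E) (x x' : ℝ → E) (τ : ℝ) (I : Set ℝ) : Prop :=
  IntervalFrom I τ ∧ IsSolOn F x x' I ∧
  ∀ (y y' : ℝ → E) (J : Set ℝ), IntervalFrom J τ → IsSolOn F y y' J →
    I ⊆ J → (∀ t ∈ I, y t = x t) → J = I

/-- `F` admits local solutions over `D × J`. -/
def AdmitsLocalSols (F : E → ℝ → Set E) (D : Set E) (J : Set ℝ) : Prop :=
  ∀ y ∈ D, ∀ τ ∈ J, ∃ T, τ < T ∧ ∃ x x' : ℝ → E,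
    IsSolOn F x x' (Ico τ T) ∧ x τ = y

/-- The reduction `G_U^F(x,t) = {q ∈ F(x,t) : ∃a, ∀p ∈ ∂U(x,t), pᵀ[q;1] = a}`. -/
def GRed (U : E × ℝ → ℝ) (F : E → ℝ → Set E) (x : E) (t : ℝ) : Set E :=
  {q ∈ F x t | ∃ a : ℝ, ∀ p ∈ cGradP U (x, t), pin p (q, 1) = a}

/-- The `𝒰`-reduced differential inclusion `F̃_𝒰 = ⋂ᵢ G_{Uᵢ}^F`. -/
def FRed (𝒰 : ℕ → E × ℝ → ℝ) (F : E → ℝ → Set E) (x : E) (t : ℝ) : Set E :=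
  ⋂ i, GRed (𝒰 i) F x t

open Classical in
/-- The `𝒰`-generalized derivative of `V` in the directions `F` (time-varying),
valued in `EReal` so that it is `⊥ = −∞` when `F̃_𝒰(x,t) = ∅`. -/
def genD (V : E × ℝ → ℝ) (𝒰 : ℕ → E × ℝ → ℝ) (F : E → ℝ → Set E) (x : E) (t : ℝ) : EReal :=
  if ∀ z, RegularAt V z then
    ⨅ p ∈ cGradP V (x, t), ⨆ q ∈ FRed 𝒰 F x t, ((pin p (q, 1) : ℝ) : EReal)
  else
    ⨆ p ∈ cGradP V (x, t), ⨆ q ∈ FRed 𝒰 F x t, ((pin p (q, 1) : ℝ) : EReal)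

/-- Autonomous reduction. -/
def GRedA (U : E → ℝ) (F : E → Set E) (x : E) : Set E :=
  {q ∈ F x | ∃ a : ℝ, ∀ p ∈ cGrad U x, (inner ℝ p q : ℝ) = a}

/-- Autonomous `𝒰`-reduced inclusion. -/
def FRedA (𝒰 : ℕ → E → ℝ) (F : E → Set E) (x : E) : Set E := ⋂ i, GRedA (𝒰 i) F x

open Classical in
/-- Autonomous `𝒰`-generalized derivative. -/
def genDA (V : E → ℝ) (𝒰 : ℕ → E → ℝ) (F : E → Set E) (x : E) : EReal :=
  if ∀ z, RegularAt V z then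
    ⨅ p ∈ cGrad V x, ⨆ q ∈ FRedA 𝒰 F x, ((inner ℝ p q : ℝ) : EReal)
  else
    ⨆ p ∈ cGrad V x, ⨆ q ∈ FRedA 𝒰 F x, ((inner ℝ p q : ℝ) : EReal)

/-- Positive definiteness on a set containing the origin. -/
def PosDefOn (V : E → ℝ) (D : Set E) : Prop :=
  V 0 = 0 ∧ ∀ x ∈ D, x ≠ 0 → 0 < V x

/-- `F : E ⇉ E` (autonomous) viewed as a time-varying map. -/
def auton (F : E → Set E) : E → ℝ → Set E := fun x _ => F x

/-- Local boundedness of an autonomous set-valued map on `D`. -/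
def LocBddA (F : E → Set E) (D : Set E) : Prop :=
  ∀ x ∈ D, ∃ ε > 0, ∃ M, ∀ y ∈ ball x ε, ∀ v ∈ F y, ‖v‖ ≤ M

/-- Local boundedness of a time-varying set-valued map on `D × [t₀,∞)`. -/
def LocBdd (F : E → ℝ → Set E) (D : Set E) (t₀ : ℝ) : Prop :=
  ∀ x ∈ D, ∀ t ∈ Ici t₀, ∃ ε > 0, ∃ M, ∀ y ∈ ball x ε, ∀ s ∈ Ici t₀ ∩ ball t ε,
    ∀ v ∈ F y s, ‖v‖ ≤ M

/-- Outer semicontinuity of an autonomous set-valued map over `D`. -/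
def OuterSC (F : E → Set E) (D : Set E) : Prop :=
  ∀ x ∈ D, ∀ (u v : ℕ → E), Tendsto u atTop (𝓝 x) → (∀ i, v i ∈ F (u i)) →
    ∀ y, Tendsto v atTop (𝓝 y) → y ∈ F x

/-- Weak forward invariance of `A` for the autonomous inclusion `ẋ ∈ F(x)`. -/
def WeakInv (F : E → Set E) (A : Set E) : Prop :=
  ∀ x₀ ∈ A, ∃ x x' I, IsMaxSol (auton F) x x' 0 I ∧ x 0 = x₀ ∧ ∀ t ∈ I, x t ∈ A

/-- Strong forward invariance of `A` for the autonomous inclusion `ẋ ∈ F(x)`. -/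
def StrongInv (F : E → Set E) (A : Set E) : Prop :=
  ∀ x x' I, IsMaxSol (auton F) x x' 0 I → x 0 ∈ A → ∀ t ∈ I, x t ∈ A

end Core


/-- The compact domain `B̄(0_m,γ) × D(δ,Δ)` with `D(δ,Δ)` the closed annulus. -/
def matDom (m n : ℕ) (γ δ Δ : ℝ) : Set (EuclideanSpace ℝ (Fin m) × EuclideanSpace ℝ (Fin n)) :=
  closedBall (0 : EuclideanSpace ℝ (Fin m)) γ ×ˢ
    {y : EuclideanSpace ℝ (Fin n) | δ ≤ ‖y‖ ∧ ‖y‖ ≤ Δ}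

/-- The Matrosov property for an extended family `Y` (with the conventions
`Y 0 = 0` and `Y (M+1) = 1` supplied as hypotheses elsewhere). -/
def MatProp (m n : ℕ) (M : ℕ) (Y : ℕ → EuclideanSpace ℝ (Fin m) × EuclideanSpace ℝ (Fin n) → ℝ)
    (γ δ Δ : ℝ) : Prop :=
  ∀ j ≤ M, ∀ z ∈ matDom m n γ δ Δ, (∀ i ≤ j, Y i z = 0) → Y (j+1) z ≤ 0

/-!
On the compact set where `Y₁ = ⋯ = Y_{M-1} = 0`, the Matrosov property forces `Y_M < 0` (were
`Y_M = 0` there too, it would give `1 = Y_{M+1} ≤ 0`), so `Y_M ≤ -ε`. Going down one level at a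
time: if `V ≤ 0` on a compact set and `W ≤ -c` where `V = 0`, then `K V + W ≤ -c/2` for a large
enough `K`, since `V` is bounded away from `0` on the compact set where `W ≥ -c/2`. After
`M - 1` such steps the weighted sum is `≤ -ε / 2^(M-1)` on the whole domain.
-/

def jointZeroSet {X : Type*} (A : Set X) (Y : ℕ → X → ℝ) (k : ℕ) : Set X :=
  {z ∈ A | ∀ i ≤ k, Y i z = 0}

section JointZeroSet

variable {X : Type*} {A : Set X} {Y : ℕ → X → ℝ} {k : ℕ}

lemma jointZeroSet_subset : jointZeroSet A Y k ⊆ A := fun _ hz => hz.1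

lemma jointZeroSet_zero (hY₀ : ∀ z ∈ A, Y 0 z = 0) : jointZeroSet A Y 0 = A :=
  Subset.antisymm jointZeroSet_subset fun z hz => ⟨hz, fun i hi => by
    obtain rfl := Nat.le_zero.mp hi
    exact hY₀ z hz⟩

lemma mem_jointZeroSet_succ {z : X} :
    z ∈ jointZeroSet A Y (k + 1) ↔ z ∈ jointZeroSet A Y k ∧ Y (k + 1) z = 0 := by
  refine ⟨fun ⟨hzA, hz⟩ => ⟨⟨hzA, fun i hi => hz i (by omega)⟩, hz _ le_rfl⟩,
    fun ⟨⟨hzA, hz⟩, hk⟩ => ⟨hzA, fun i hi => ?_⟩⟩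
  rcases Nat.le_succ_iff.mp hi with hi | rfl
  exacts [hz i hi, hk]

lemma jointZeroSet_eq_biInter :
    jointZeroSet A Y k = ⋂ i ∈ Iic k, A ∩ Y i ⁻¹' {0} := by
  ext z
  simp only [jointZeroSet, mem_ofPred_eq, mem_iInter, mem_inter_iff, mem_preimage,
    mem_singleton_iff, mem_Iic]
  exact ⟨fun ⟨hzA, hz⟩ i hi => ⟨hzA, hz i hi⟩,
    fun h => ⟨(h 0 k.zero_le).1, fun i hi => (h i hi).2⟩⟩

lemma neg_of_mem_jointZeroSet
    (hY_nonpos : ∀ j ≤ k + 1, ∀ z ∈ jointZeroSet A Y j, Y (j + 1) z ≤ 0)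
    (hY_top : ∀ z ∈ A, 0 < Y (k + 2) z) : ∀ z ∈ jointZeroSet A Y k, Y (k + 1) z < 0 :=
  fun z hz => (hY_nonpos k k.le_succ z hz).lt_of_ne fun h0 =>
    (hY_top z hz.1).not_ge (hY_nonpos (k + 1) le_rfl z (mem_jointZeroSet_succ.mpr ⟨hz, h0⟩))

variable [TopologicalSpace X] [T2Space X]

lemma isCompact_jointZeroSet (hA : IsCompact A) (hY : ∀ i ≤ k, ContinuousOn (Y i) A) :
    IsCompact (jointZeroSet A Y k) := by
  refine hA.of_isClosed_subset ?_ jointZeroSet_subset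
  rw [jointZeroSet_eq_biInter]
  exact isClosed_biInter fun i hi =>
    (hY i hi).preimage_isClosed_of_isClosed hA.isClosed isClosed_singleton

end JointZeroSet

section Matrosov

variable {X : Type*} [TopologicalSpace X] {A : Set X}

lemma IsCompact.exists_pos_forall_le_neg {f : X → ℝ} (hA : IsCompact A) (hf : ContinuousOn f A)
    (hneg : ∀ z ∈ A, f z < 0) : ∃ ε > (0 : ℝ), ∀ z ∈ A, f z ≤ -ε := by
  rcases A.eq_empty_or_nonempty with rfl | hne
  · exact ⟨1, one_pos, by simp⟩
  obtain ⟨z₀, hz₀, hmax⟩ := hA.exists_isMaxOn hne hf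
  exact ⟨-f z₀, neg_pos.mpr (hneg z₀ hz₀), fun z hz => by simpa using hmax hz⟩

variable [T2Space X]

lemma IsCompact.exists_pos_mul_add_le_half {V W : X → ℝ} {c : ℝ} (hA : IsCompact A)
    (hV : ContinuousOn V A) (hW : ContinuousOn W A) (hc : 0 < c)
    (hV_nonpos : ∀ z ∈ A, V z ≤ 0) (hW_le : ∀ z ∈ A, V z = 0 → W z ≤ -c) :
    ∃ K > (0 : ℝ), ∀ z ∈ A, K * V z + W z ≤ -(c / 2) := by
  -- Where `W ≥ -c/2` the function `V` is negative, so `(W + c/2) / -V` is continuous there.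
  set B := A ∩ W ⁻¹' Ici (-c / 2)
  have hB : IsCompact B :=
    hA.of_isClosed_subset (hW.preimage_isClosed_of_isClosed hA.isClosed isClosed_Ici)
      inter_subset_left
  have hV_neg : ∀ z ∈ B, V z < 0 := fun z hz =>
    (hV_nonpos z hz.1).lt_of_ne fun h0 => by
      have : -c / 2 ≤ -c := hz.2.trans (hW_le z hz.1 h0)
      linarith
  obtain ⟨K₀, hK₀⟩ := hB.bddAbove_image (f := fun z => (W z + c / 2) / -V z) <|
    ((hW.mono inter_subset_left).add continuousOn_const).div
      (hV.mono inter_subset_left).neg fun z hz => (neg_pos.mpr (hV_neg z hz)).ne'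
  refine ⟨max K₀ 1, lt_max_of_lt_right one_pos, fun z hz => ?_⟩
  by_cases hzW : -c / 2 ≤ W z
  · have hVz := neg_pos.mpr (hV_neg z ⟨hz, hzW⟩)
    have hratio : W z + c / 2 ≤ K₀ * -V z :=
      (div_le_iff₀ hVz).mp (hK₀ (mem_image_of_mem _ ⟨hz, hzW⟩))
    nlinarith [le_max_left K₀ 1]
  · nlinarith [hV_nonpos z hz, le_max_right K₀ 1]

lemma IsCompact.exists_pos_weights_sum_add_le {Y : ℕ → X → ℝ} {W : X → ℝ} {c : ℝ} {k : ℕ}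
    (hA : IsCompact A) (hY : ∀ i ≤ k, ContinuousOn (Y i) A) (hW : ContinuousOn W A)
    (hc : 0 < c) (hY_nonpos : ∀ j < k, ∀ z ∈ jointZeroSet A Y j, Y (j + 1) z ≤ 0)
    (hW_le : ∀ z ∈ jointZeroSet A Y k, W z ≤ -c) :
    ∃ K : ℕ → ℝ, (∀ j, 1 ≤ j → j ≤ k → 0 < K j) ∧
      ∀ z ∈ jointZeroSet A Y 0, ∑ j ∈ Finset.Icc 1 k, K j * Y j z + W z ≤ -c / 2 ^ k := by
  induction k generalizing W c with
  | zero => exact ⟨0, by omega, by simpa using hW_le⟩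
  | succ k ih =>
    obtain ⟨Kₖ, hKₖ, hWₖ⟩ :=
      (isCompact_jointZeroSet hA fun i hi => hY i (by omega)).exists_pos_mul_add_le_half
      ((hY (k + 1) le_rfl).mono jointZeroSet_subset) (hW.mono jointZeroSet_subset) hc
      (hY_nonpos k k.lt_succ_self) fun z hz h0 => hW_le z (mem_jointZeroSet_succ.mpr ⟨hz, h0⟩)
    obtain ⟨K, hK, hsum⟩ := ih (fun i hi => hY i (by omega))
      (W := fun z => Kₖ * Y (k + 1) z + W z)
      ((continuousOn_const.mul (hY (k + 1) le_rfl)).add hW) (half_pos hc)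
      (fun j hj => hY_nonpos j (by omega)) hWₖ
    refine ⟨Function.update K (k + 1) Kₖ, fun j hj₁ hj₂ => ?_, fun z hz => ?_⟩
    · rcases Nat.le_succ_iff.mp hj₂ with hj | rfl
      · rw [Function.update_of_ne (by omega)]
        exact hK j hj₁ hj
      · rwa [Function.update_self]
    · have hupdate : ∑ j ∈ Finset.Icc 1 k, Function.update K (k + 1) Kₖ j * Y j z =
          ∑ j ∈ Finset.Icc 1 k, K j * Y j z :=
        Finset.sum_congr rfl fun j hj => by
          rw [Function.update_of_ne (by simp only [Finset.mem_Icc] at hj; omega)]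
      have hhalf : -(c / 2) / 2 ^ k = -c / 2 ^ (k + 1) := by rw [pow_succ]; ring
      rw [Finset.sum_Icc_succ_top (by omega), hupdate, Function.update_self]
      linarith [hsum z hz]

end Matrosov

lemma isCompact_annulus {E : Type*} [NormedAddCommGroup E] [ProperSpace E] (δ Δ : ℝ) :
    IsCompact {y : E | δ ≤ ‖y‖ ∧ ‖y‖ ≤ Δ} :=
  (isCompact_closedBall (0 : E) Δ).of_isClosed_subset
    ((isClosed_le continuous_const continuous_norm).inter
      (isClosed_le continuous_norm continuous_const))
    fun _ hy => mem_closedBall_zero_iff.mpr hy.2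

lemma isCompact_matDom (m n : ℕ) (γ δ Δ : ℝ) : IsCompact (matDom m n γ δ Δ) :=
  (isCompact_closedBall _ _).prod (isCompact_annulus δ Δ)

lemma MatProp.nonpos_of_mem_jointZeroSet {m n M : ℕ} {γ δ Δ : ℝ}
    {Y : ℕ → EuclideanSpace ℝ (Fin m) × EuclideanSpace ℝ (Fin n) → ℝ}
    (h : MatProp m n M Y γ δ Δ) :
    ∀ j ≤ M, ∀ z ∈ jointZeroSet (matDom m n γ δ Δ) Y j, Y (j + 1) z ≤ 0 :=
  fun j hj z hz => h j hj z hz.1 hz.2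

theorem stmt15_general (m n : ℕ) (γ δ Δ : ℝ)
    (M : ℕ) (hM : 1 ≤ M)
    (Y : ℕ → EuclideanSpace ℝ (Fin m) × EuclideanSpace ℝ (Fin n) → ℝ)
    (hY0 : ∀ z, Y 0 z = 0) (hYtop : ∀ z, Y (M+1) z = 1)
    (hYc : ∀ j, 1 ≤ j → j ≤ M → ContinuousOn (Y j) (matDom m n γ δ Δ))
    (hmat : MatProp m n M Y γ δ Δ) :
    ∃ ζ > (0:ℝ), ∃ K : ℕ → ℝ, (∀ j, 1 ≤ j → j ≤ M - 1 → 0 < K j) ∧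
      ∀ z ∈ matDom m n γ δ Δ,
        (∑ j ∈ Finset.Icc 1 (M-1), K j * Y j z) + Y M z ≤ -ζ / 2^(M-1) := by
  obtain ⟨k, rfl⟩ : ∃ k, M = k + 1 := ⟨M - 1, by omega⟩
  rw [Nat.add_sub_cancel]
  set A := matDom m n γ δ Δ
  have hA : IsCompact A := isCompact_matDom m n γ δ Δ
  have hY : ∀ i ≤ k + 1, ContinuousOn (Y i) A := fun i hi => by
    rcases i.eq_zero_or_pos with rfl | hi₀
    · exact continuousOn_const.congr fun z _ => hY0 z
    · exact hYc i hi₀ hi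
  have hY_nonpos := hmat.nonpos_of_mem_jointZeroSet
  obtain ⟨ε, hε, hYε⟩ :=
    (isCompact_jointZeroSet hA fun i hi => hY i (by omega)).exists_pos_forall_le_neg
    ((hY (k + 1) le_rfl).mono jointZeroSet_subset)
    (neg_of_mem_jointZeroSet hY_nonpos fun z _ => (hYtop z).symm ▸ one_pos)
  obtain ⟨K, hK, hsum⟩ := hA.exists_pos_weights_sum_add_le (fun i hi => hY i (by omega))
    (hY (k + 1) le_rfl) hε (fun j hj => hY_nonpos j (by omega)) hYε
  rw [jointZeroSet_zero fun z _ => hY0 z] at hsum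
  exact ⟨ε, hε, K, hK, hsum⟩

/-- Matrosov decrement combination. -/
theorem stmt15 (m n : ℕ) (γ δ Δ : ℝ) (hγ : 0 < γ) (hδ : 0 < δ) (hΔ : 0 < Δ)
    (M : ℕ) (hM : 1 ≤ M)
    (Y : ℕ → EuclideanSpace ℝ (Fin m) × EuclideanSpace ℝ (Fin n) → ℝ)
    (hY0 : ∀ z, Y 0 z = 0) (hYtop : ∀ z, Y (M+1) z = 1)
    (hYc : ∀ j, 1 ≤ j → j ≤ M → ContinuousOn (Y j) (matDom m n γ δ Δ))
    (hmat : MatProp m n M Y γ δ Δ) :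
    ∃ ζ > (0:ℝ), ∃ K : ℕ → ℝ, (∀ j, 1 ≤ j → j ≤ M - 1 → 0 < K j) ∧
      ∀ z ∈ matDom m n γ δ Δ,
        (∑ j ∈ Finset.Icc 1 (M-1), K j * Y j z) + Y M z ≤ -ζ / 2^(M-1) :=
  stmt15_general m n γ δ Δ M hM Y hY0 hYtop hYc hmat
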